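/- arXiv:2007.03267 — 2 statements merged into one kernel-verified Lean document; each statement's English description precedes it below -/
import Mathlib

section
/- For |t| < 1 and |q| < 1, the generating function of the Rogers–Szegő polynomials satisfies ∑_{k≥0} t^k s_k(x|q)/(q;q)_k = 1/((tx;q)_∞ (t;q)_∞), where s_n(x|q) = ∑_{k=0}^n [n choose k]_q x^k. -/
/-- The Gaussian (q-)binomial coefficient, defined via the q-Pascal rule. -/
def gaussBinom (q : ℂ) : ℕ → ℕ → ℂ
  | _, 0 => 1
  | 0, _ + 1 => 0
  | n + 1, k + 1 => gaussBinom q n k + q ^ (k + 1) * gaussBinom q n (k + 1)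

/-- The Rogers–Szegő polynomial `s_n(x|q) = ∑_{k=0}^n [n choose k]_q x^k`. -/
noncomputable def rogersSzego (q x : ℂ) (n : ℕ) : ℂ :=
  ∑ k ∈ Finset.range (n + 1), gaussBinom q n k * x ^ k

open Finset Filter Topology

/-! Euler's identity `∑ cⁿ/(q;q)ₙ = 1/(c;q)_∞`, applied at `c = tx` and `c = t`, turns the
right-hand side into a product of two power series in `t`. Since
`[n choose i]_q = (q;q)ₙ/((q;q)ᵢ (q;q)ₙ₋ᵢ)`, their Cauchy product is the left-hand side.
Euler's identity follows from the functional equation `e(c) (1 - c) = e(qc)` of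
`e(c) = ∑ cⁿ/(q;q)ₙ`: iterating it gives `e(c) ∏_{j<n} (1 - c qʲ) = e(qⁿ c)`, which tends to
`e(0) = 1`. -/

section QFactorial

variable {R : Type*} [CommRing R]

def qFactorial (q : R) (n : ℕ) : R :=
  ∏ j ∈ range n, (1 - q ^ (j + 1))

@[simp]
lemma qFactorial_zero (q : R) : qFactorial q 0 = 1 := prod_range_zero _

lemma qFactorial_succ (q : R) (n : ℕ) :
    qFactorial q (n + 1) = qFactorial q n * (1 - q ^ (n + 1)) :=
  prod_range_succ _ _

end QFactorial

lemma gaussBinom_eq_zero_of_lt (q : ℂ) : ∀ {n k : ℕ}, n < k → gaussBinom q n k = 0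
  | 0, _ + 1, _ => rfl
  | n + 1, k + 1, h => by
    rw [gaussBinom, gaussBinom_eq_zero_of_lt q (by omega), gaussBinom_eq_zero_of_lt q (by omega)]
    ring

lemma gaussBinom_self (q : ℂ) : ∀ n : ℕ, gaussBinom q n n = 1
  | 0 => rfl
  | n + 1 => by
    rw [gaussBinom, gaussBinom_self q n, gaussBinom_eq_zero_of_lt q (Nat.lt_succ_self n)]
    ring

lemma gaussBinom_add_mul_qFactorial (q : ℂ) :
    ∀ i j : ℕ, gaussBinom q (i + j) i * (qFactorial q i * qFactorial q j) = qFactorial q (i + j)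
  | 0, j => by simp [gaussBinom]
  | i + 1, 0 => by simp [gaussBinom_self]
  | i + 1, j + 1 => by
    have hleft := gaussBinom_add_mul_qFactorial q i (j + 1)
    have hright := gaussBinom_add_mul_qFactorial q (i + 1) j
    rw [show i + (j + 1) = i + j + 1 by omega] at hleft
    rw [show i + 1 + j = i + j + 1 by omega] at hright
    rw [show i + 1 + (j + 1) = i + j + 1 + 1 by omega, gaussBinom]
    rw [qFactorial_succ q i, qFactorial_succ q j, qFactorial_succ q (i + j + 1)] at *
    -- `1 - q ^ (i + j + 2) = (1 - q ^ (i + 1)) + q ^ (i + 1) * (1 - q ^ (j + 1))`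
    linear_combination (1 - q ^ (i + 1)) * hleft + q ^ (i + 1) * (1 - q ^ (j + 1)) * hright

section Euler

variable {𝕜 : Type*} [NormedField 𝕜] {q c : 𝕜}

lemma one_sub_ne_zero_of_norm_lt_one {a : 𝕜} (ha : ‖a‖ < 1) : 1 - a ≠ 0 := by
  intro h
  rw [← sub_eq_zero.1 h, norm_one] at ha
  exact lt_irrefl 1 ha

lemma norm_pow_mul_le (hq : ‖q‖ ≤ 1) (c : 𝕜) (n : ℕ) : ‖q ^ n * c‖ ≤ ‖c‖ := by
  rw [norm_mul, norm_pow]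
  exact mul_le_of_le_one_left (norm_nonneg c) (pow_le_one₀ (norm_nonneg q) hq)

lemma one_sub_pow_succ_ne_zero (hq : ‖q‖ < 1) (n : ℕ) : 1 - q ^ (n + 1) ≠ 0 :=
  one_sub_ne_zero_of_norm_lt_one <| by
    rw [norm_pow]; exact pow_lt_one₀ (norm_nonneg q) hq n.succ_ne_zero

lemma qFactorial_ne_zero (hq : ‖q‖ < 1) (n : ℕ) : qFactorial q n ≠ 0 :=
  prod_ne_zero_iff.2 fun j _ ↦ one_sub_pow_succ_ne_zero hq j

lemma summable_norm_mul_pow (c : 𝕜) (hq : ‖q‖ < 1) : Summable fun j : ℕ ↦ ‖c * q ^ j‖ := by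
  simp_rw [norm_mul, norm_pow]
  exact (summable_geometric_of_lt_one (norm_nonneg q) hq).mul_left _

variable [CompleteSpace 𝕜]

lemma multipliable_one_sub_mul_pow (c : 𝕜) (hq : ‖q‖ < 1) :
    Multipliable fun j : ℕ ↦ 1 - c * q ^ j := by
  simpa only [← sub_eq_add_neg] using multipliable_one_add_of_summable (f := fun j ↦ -(c * q ^ j))
    (by simpa only [norm_neg] using summable_norm_mul_pow c hq)

lemma tprod_one_sub_mul_pow_ne_zero (hq : ‖q‖ < 1) (hc : ∀ j : ℕ, 1 - c * q ^ j ≠ 0) :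
    ∏' j : ℕ, (1 - c * q ^ j) ≠ 0 := by
  simp only [sub_eq_add_neg] at hc ⊢
  exact tprod_one_add_ne_zero_of_summable hc
    (by simpa only [norm_neg] using summable_norm_mul_pow c hq)

lemma bddAbove_norm_inv_qFactorial (hq : ‖q‖ < 1) :
    BddAbove (Set.range fun n ↦ ‖(qFactorial q n)⁻¹‖) := by
  have hfactor : qFactorial q = fun n ↦ ∏ j ∈ range n, (1 - q * q ^ j) := by
    simp_rw [← pow_succ']; rfl
  have hlim : Tendsto (qFactorial q) atTop (𝓝 (∏' j : ℕ, (1 - q * q ^ j))) :=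
    hfactor ▸ (multipliable_one_sub_mul_pow q hq).hasProd.tendsto_prod_nat
  have hne : ∏' j : ℕ, (1 - q * q ^ j) ≠ 0 := tprod_one_sub_mul_pow_ne_zero hq fun j ↦ by
    simpa only [← pow_succ'] using one_sub_pow_succ_ne_zero hq j
  exact (hlim.inv₀ hne).norm.bddAbove_range

noncomputable def qExp (q c : 𝕜) : 𝕜 :=
  ∑' n : ℕ, c ^ n / qFactorial q n

lemma summable_norm_pow_div_qFactorial (hq : ‖q‖ < 1) (hc : ‖c‖ < 1) :
    Summable fun n : ℕ ↦ ‖c ^ n / qFactorial q n‖ := by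
  obtain ⟨C, hC⟩ := bddAbove_norm_inv_qFactorial hq
  refine .of_nonneg_of_le (fun n ↦ norm_nonneg _) (fun n ↦ ?_)
    ((summable_geometric_of_lt_one (norm_nonneg c) hc).mul_right C)
  rw [div_eq_mul_inv, norm_mul, norm_pow]
  exact mul_le_mul_of_nonneg_left (hC ⟨n, rfl⟩) (by positivity)

lemma qExp_mul_one_sub (hq : ‖q‖ < 1) (hc : ‖c‖ < 1) : qExp q c * (1 - c) = qExp q (q * c) := by
  have hqc : ‖q * c‖ < 1 := by simpa using (norm_pow_mul_le hq.le c 1).trans_lt hc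
  have hsum := (summable_norm_pow_div_qFactorial hq hc).of_norm
  have hsum' := (summable_norm_pow_div_qFactorial hq hqc).of_norm
  have hstep (n : ℕ) : c ^ (n + 1) / qFactorial q (n + 1) - (q * c) ^ (n + 1) / qFactorial q (n + 1)
      = c * (c ^ n / qFactorial q n) := by
    have := qFactorial_ne_zero hq n
    have := one_sub_pow_succ_ne_zero hq n
    rw [qFactorial_succ]
    field_simp
    ring
  have hdiff : qExp q c - qExp q (q * c) = c * qExp q c := by
    rw [qExp, qExp, ← hsum.tsum_sub hsum', (hsum.sub hsum').tsum_eq_zero_add]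
    simp only [hstep, tsum_mul_left]
    simp
  linear_combination hdiff

lemma qExp_mul_prod_one_sub (hq : ‖q‖ < 1) (hc : ‖c‖ < 1) (n : ℕ) :
    qExp q c * ∏ j ∈ range n, (1 - c * q ^ j) = qExp q (q ^ n * c) := by
  induction n with
  | zero => simp
  | succ n ih =>
    rw [prod_range_succ, ← mul_assoc, ih, mul_comm c, pow_succ', mul_assoc,
      qExp_mul_one_sub hq ((norm_pow_mul_le hq.le c n).trans_lt hc)]

lemma tendsto_qExp_pow_mul (hq : ‖q‖ < 1) (hc : ‖c‖ < 1) :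
    Tendsto (fun n : ℕ ↦ qExp q (q ^ n * c)) atTop (𝓝 1) := by
  obtain ⟨C, hC⟩ := bddAbove_norm_inv_qFactorial hq
  have hterm (k : ℕ) : Tendsto (fun n : ℕ ↦ (q ^ n * c) ^ k / qFactorial q k) atTop
      (𝓝 ((0 : 𝕜) ^ k / qFactorial q k)) := by
    simpa using (((tendsto_pow_atTop_nhds_zero_of_norm_lt_one hq).mul_const c).pow k).div_const _
  have hbound (n k : ℕ) : ‖(q ^ n * c) ^ k / qFactorial q k‖ ≤ ‖c‖ ^ k * C := by
    rw [div_eq_mul_inv, norm_mul, norm_pow]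
    exact mul_le_mul (pow_le_pow_left₀ (norm_nonneg _) (norm_pow_mul_le hq.le c n) k)
      (hC ⟨k, rfl⟩) (norm_nonneg _) (by positivity)
  have hlim : ∑' k : ℕ, (0 : 𝕜) ^ k / qFactorial q k = 1 := by
    rw [tsum_eq_single 0 fun k hk ↦ by simp [zero_pow hk]]
    simp
  exact hlim ▸ tendsto_tsum_of_dominated_convergence
    ((summable_geometric_of_lt_one (norm_nonneg c) hc).mul_right C) hterm (.of_forall hbound)

lemma qExp_eq_inv_tprod (hq : ‖q‖ < 1) (hc : ‖c‖ < 1) :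
    qExp q c = (∏' j : ℕ, (1 - c * q ^ j))⁻¹ := by
  have hpartial :=
    ((multipliable_one_sub_mul_pow c hq).hasProd.tendsto_prod_nat).const_mul (qExp q c)
  simp only [qExp_mul_prod_one_sub hq hc] at hpartial
  exact eq_inv_of_mul_eq_one_left (tendsto_nhds_unique hpartial (tendsto_qExp_pow_mul hq hc))

lemma qExp_mul_qExp (hq : ‖q‖ < 1) {a b : 𝕜} (ha : ‖a‖ < 1) (hb : ‖b‖ < 1) :
    qExp q a * qExp q b =
      ∑' n : ℕ, ∑ i ∈ range (n + 1),
        a ^ i / qFactorial q i * (b ^ (n - i) / qFactorial q (n - i)) :=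
  tsum_mul_tsum_eq_tsum_sum_range_of_summable_norm (f := fun n ↦ a ^ n / qFactorial q n)
    (g := fun n ↦ b ^ n / qFactorial q n)
    (summable_norm_pow_div_qFactorial hq ha) (summable_norm_pow_div_qFactorial hq hb)

end Euler

lemma pow_mul_rogersSzego_div_qFactorial {q : ℂ} (hq : ‖q‖ < 1) (t x : ℂ) (n : ℕ) :
    t ^ n * rogersSzego q x n / qFactorial q n =
      ∑ i ∈ range (n + 1), (t * x) ^ i / qFactorial q i * (t ^ (n - i) / qFactorial q (n - i)) := by
  rw [rogersSzego, mul_sum, sum_div]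
  refine sum_congr rfl fun i hi ↦ ?_
  obtain ⟨j, rfl⟩ := Nat.exists_eq_add_of_le (Nat.lt_succ_iff.1 (mem_range.1 hi))
  have hbinom := gaussBinom_add_mul_qFactorial q i j
  have := qFactorial_ne_zero hq i
  have := qFactorial_ne_zero hq j
  have := qFactorial_ne_zero hq (i + j)
  rw [Nat.add_sub_cancel_left]
  field_simp
  linear_combination (t ^ i * x ^ i * t ^ j) * hbinom

/-- Generating function of the Rogers–Szegő polynomials:
`∑_k t^k s_k(x|q)/(q;q)_k = 1/((tx;q)_∞ (t;q)_∞)`. -/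
theorem rogersSzego_generating_function (t q x : ℂ)
    (ht : ‖t‖ < 1) (hq : ‖q‖ < 1) (htx : ‖t * x‖ < 1) :
    (∑' k : ℕ, t ^ k * rogersSzego q x k / ∏ j ∈ Finset.range k, (1 - q ^ (j + 1))) =
      ((∏' j : ℕ, (1 - t * x * q ^ j)) * ∏' j : ℕ, (1 - t * q ^ j))⁻¹ := by
  calc ∑' k : ℕ, t ^ k * rogersSzego q x k / ∏ j ∈ Finset.range k, (1 - q ^ (j + 1))
      = ∑' k : ℕ, ∑ i ∈ range (k + 1),
          (t * x) ^ i / qFactorial q i * (t ^ (k - i) / qFactorial q (k - i)) := by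
        simp_rw [← qFactorial.eq_1, pow_mul_rogersSzego_div_qFactorial hq]
    _ = qExp q (t * x) * qExp q t := (qExp_mul_qExp hq htx ht).symm
    _ = _ := by rw [qExp_eq_inv_tprod hq htx, qExp_eq_inv_tprod hq ht, mul_inv]
end

section
/- Linearization formula for q-Hermite polynomials: for all n, m ≥ 0 and all x, q, h_n(x|q) h_m(x|q) = ∑_{j=0}^{min(n,m)} [m choose j]_q [n choose j]_q (q;q)_j h_{n+m-2j}(x|q). -/
/-- The continuous q-Hermite polynomials. -/
def qHermite (q x : ℂ) : ℕ → ℂ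
  | 0 => 1
  | 1 => 2 * x
  | n + 2 => 2 * x * qHermite q x (n + 1) - (1 - q ^ (n + 1)) * qHermite q x n

lemma gauss_zero_right (q : ℂ) (n : ℕ) : gaussBinom q n 0 = 1 := by cases n <;> rfl

lemma gauss_pascal (q : ℂ) (n k : ℕ) : gaussBinom q (n+1) (k+1)
    = gaussBinom q n k + q ^ (k + 1) * gaussBinom q n (k + 1) := rfl

lemma gauss_eq_zero (q : ℂ) : ∀ n k, n < k → gaussBinom q n k = 0 := by
  intro n
  induction n with
  | zero => intro k h; match k, h with | k+1, _ => rfl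
  | succ n ih =>
    intro k h
    match k, h with
    | k+1, h =>
      rw [gauss_pascal, ih k (by omega), ih (k+1) (by omega)]
      ring

lemma gauss_pascal' (q : ℂ) : ∀ m k, gaussBinom q (m+1) (k+1)
    = q ^ (m - k) * gaussBinom q m k + gaussBinom q m (k+1) := by
  intro m
  induction m with
  | zero =>
    intro k
    match k with
    | 0 => simp [gaussBinom]
    | k+1 =>
      rw [gauss_pascal, gauss_eq_zero q 0 (k+1) (by omega),
        gauss_eq_zero q 0 (k+2) (by omega)]
      ring
  | succ m ih =>
    intro k
    match k with
    | 0 =>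
      have h := ih 0
      rw [gauss_zero_right, Nat.sub_zero] at h
      have hp := gauss_pascal q m 0
      rw [gauss_zero_right] at hp
      rw [gauss_pascal q (m+1) 0, gauss_zero_right, Nat.sub_zero,
        show (q:ℂ)^(m+1) = q^m * q from pow_succ q m]
      linear_combination (-1 : ℂ) * hp + q * h
    | k+1 =>
      conv_lhs => rw [gauss_pascal q (m+1) (k+1), ih k, ih (k+1)]
      conv_rhs => rw [gauss_pascal q m k, gauss_pascal q m (k+1)]
      rw [show m+1-(k+1) = m-k from by omega]
      rcases le_or_gt (k+1) m with h | h
      · rw [show (q:ℂ)^(k+1+1) * (q^(m-(k+1)) * gaussBinom q m (k+1) + gaussBinom q m (k+1+1))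
              = q^(m-k) * q^(k+1) * gaussBinom q m (k+1) + q^(k+1+1) * gaussBinom q m (k+1+1) from by
            rw [mul_add, ← mul_assoc, ← pow_add, ← pow_add]; congr 3; omega]
        ring
      · rw [gauss_eq_zero q m (k+1) h]
        ring

lemma gauss_mul (q : ℂ) : ∀ m k, (1 - q^(m+1)) * gaussBinom q m k
    = (1 - q^(m+1-k)) * gaussBinom q (m+1) k := by
  intro m
  induction m with
  | zero =>
    intro k
    match k with
    | 0 => simp [gaussBinom]
    | k+1 =>
      rw [gauss_eq_zero q 0 (k+1) (by omega), show 0+1-(k+1) = 0 from by omega, pow_zero]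
      ring
  | succ m ih =>
    intro k
    match k with
    | 0 => rw [gauss_zero_right, gauss_zero_right, Nat.sub_zero]
    | k+1 =>
      rcases le_or_gt k m with hk | hk
      · have ha := gauss_pascal q m k
        have hb := gauss_pascal q (m+1) k
        have hd := ih k
        have he := ih (k+1)
        rw [show m+1-(k+1) = m-k from by omega] at he
        rw [show (q:ℂ)^(m+1-k) = q^(m-k)*q from by rw [← pow_succ]; congr 1; omega] at hd
        rw [show (q:ℂ)^(m+1) = q^(m-k) * q^(k+1) from by rw [← pow_add]; congr 1; omega] at hd he
        rw [show m+1+1-(k+1) = m+1-k from by omega,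
          show (q:ℂ)^(m+1-k) = q^(m-k)*q from by rw [← pow_succ]; congr 1; omega,
          show (q:ℂ)^(m+1+1) = q^(m-k) * q^(k+2) from by rw [← pow_add]; congr 1; omega]
        linear_combination (q * q^(m-k) - 1) * hb + hd + (1 - q^(k+1) * q^(m-k)) * ha
          + q^(k+1) * he
      · rw [gauss_eq_zero q (m+1) (k+1) (by omega),
          show m+1+1-(k+1) = 0 from by omega, pow_zero]
        ring

lemma gauss_mul2 (q : ℂ) : ∀ n k, (1 - q^(k+1)) * gaussBinom q (n+1) (k+1)
    = (1 - q^(n+1)) * gaussBinom q n k := by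
  intro n
  induction n with
  | zero =>
    intro k
    match k with
    | 0 =>
      rw [gauss_pascal, gauss_eq_zero q 0 1 (by omega), gauss_zero_right]
      ring
    | k+1 =>
      rw [gauss_eq_zero q 1 (k+2) (by omega), gauss_eq_zero q 0 (k+1) (by omega)]
      ring
  | succ n ih =>
    intro k
    rcases le_or_gt k (n+1) with hk | hk
    · have hL2 := gauss_pascal' q (n+1) k
      have hIH := ih k
      have hL3 := gauss_mul q n k
      rw [show (q:ℂ)^(n+1+1) = q^(n+1-k) * q^(k+1) from by rw [← pow_add]; congr 1; omega]
      linear_combination (1 - q^(k+1)) * hL2 + hIH + hL3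
    · rw [gauss_eq_zero q (n+2) (k+1) (by omega), gauss_eq_zero q (n+1) k (by omega)]
      ring

lemma gauss_mul3 (q : ℂ) (n k : ℕ) : (1 - q^(k+1)) * gaussBinom q n (k+1)
    = (1 - q^(n-k)) * gaussBinom q n k := by
  match n with
  | 0 =>
    rw [gauss_eq_zero q 0 (k+1) (by omega), show (0:ℕ)-k = 0 from by omega, pow_zero]
    ring
  | n+1 =>
    rw [gauss_mul2 q n k]
    exact gauss_mul q n k

lemma hermite_rec (q x : ℂ) (k : ℕ) :
    2 * x * qHermite q x k = qHermite q x (k+1) + (1 - q^k) * qHermite q x (k-1) := by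
  match k with
  | 0 => simp [qHermite]
  | k+1 =>
    rw [show qHermite q x (k+1+1) = 2*x*qHermite q x (k+1) - (1-q^(k+1))*qHermite q x k from rfl,
      Nat.add_sub_cancel]
    ring

lemma KI (q : ℂ) (n m k : ℕ) :
    gaussBinom q (m+2) (k+1) * gaussBinom q n (k+1) * (∏ i ∈ Finset.range (k+1), (1 - q^(i+1)))
      + (1 - q^(m+1)) * (gaussBinom q m k * gaussBinom q n k * (∏ i ∈ Finset.range k, (1 - q^(i+1))))
    = gaussBinom q (m+1) (k+1) * gaussBinom q n (k+1) * (∏ i ∈ Finset.range (k+1), (1 - q^(i+1)))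
      + (1 - q^(n+m+1-2*k)) * (gaussBinom q (m+1) k * gaussBinom q n k * (∏ i ∈ Finset.range k, (1 - q^(i+1)))) := by
  rw [Finset.prod_range_succ]
  by_cases h1 : n < k
  · rw [gauss_eq_zero q n k h1, gauss_eq_zero q n (k+1) (by omega)]
    ring
  by_cases h2 : m+1 < k
  · rw [gauss_eq_zero q (m+2) (k+1) (by omega), gauss_eq_zero q m k (by omega),
      gauss_eq_zero q (m+1) (k+1) (by omega), gauss_eq_zero q (m+1) k (by omega)]
    ring
  push_neg at h1 h2
  have hL2 := gauss_pascal' q (m+1) k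
  have hL4 := gauss_mul3 q n k
  have hL3 := gauss_mul q m k
  rw [show (q:ℂ)^(n+m+1-2*k) = q^(m+1-k) * q^(n-k) from by rw [← pow_add]; congr 1; omega]
  linear_combination (gaussBinom q n (k+1) * (∏ i ∈ Finset.range k, (1 - q^(i+1))) * (1 - q^(k+1))) * hL2
    + (q^(m+1-k) * gaussBinom q (m+1) k * (∏ i ∈ Finset.range k, (1 - q^(i+1)))) * hL4
    + (gaussBinom q n k * (∏ i ∈ Finset.range k, (1 - q^(i+1)))) * hL3

/-- Linearization formula:
`h_n h_m = ∑_{j=0}^{min(n,m)} [m choose j]_q [n choose j]_q (q;q)_j h_{n+m-2j}`. -/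
theorem qHermite_linearization (n m : ℕ) (x q : ℂ) :
    qHermite q x n * qHermite q x m =
      ∑ j ∈ Finset.range (min n m + 1),
        gaussBinom q m j * gaussBinom q n j *
          (∏ i ∈ Finset.range j, (1 - q ^ (i + 1))) * qHermite q x (n + m - 2 * j) := by
  induction m using Nat.twoStepInduction with
  | zero =>
    simp [qHermite, gauss_zero_right]
  | one =>
    match n with
    | 0 => simp [qHermite, gauss_zero_right]
    | n+1 =>
      rw [show min (n+1) 1 = 1 from by omega, Finset.sum_range_succ, Finset.sum_range_one]
      have h11 : gaussBinom q 1 1 = 1 := by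
        rw [gauss_pascal, gauss_eq_zero q 0 1 (by omega), gauss_zero_right]; ring
      have hg := gauss_mul3 q (n+1) 0
      rw [gauss_zero_right, Nat.sub_zero, mul_one] at hg
      have hr := hermite_rec q x (n+1)
      rw [Nat.add_sub_cancel] at hr
      rw [h11, show n+1+1-2*0 = n+1+1 from by omega, show n+1+1-2*1 = n from by omega,
        show qHermite q x 1 = 2*x from rfl]
      simp only [gauss_zero_right, Finset.prod_range_zero, Finset.prod_range_one]
      linear_combination hr - qHermite q x n * hg
  | more m ih0 ih1 =>
    have key : ∀ M : ℕ, min n M + 1 ≤ n+m+2+1 →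
        (∑ j ∈ Finset.range (min n M + 1),
          gaussBinom q M j * gaussBinom q n j *
            (∏ i ∈ Finset.range j, (1 - q ^ (i + 1))) * qHermite q x (n + M - 2 * j))
        = ∑ j ∈ Finset.range (n+m+2+1),
          gaussBinom q M j * gaussBinom q n j *
            (∏ i ∈ Finset.range j, (1 - q ^ (i + 1))) * qHermite q x (n + M - 2 * j) := by
      intro M hKN
      apply Finset.sum_subset (Finset.range_subset_range.2 hKN)
      intro j _ hj
      rw [Finset.mem_range, not_lt] at hj
      rcases (by omega : M < j ∨ n < j) with h|h
      · rw [gauss_eq_zero q M j h]; ring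
      · rw [gauss_eq_zero q n j h]; ring
    rw [key (m+2) (by omega),
      show qHermite q x (m+2) = 2*x*qHermite q x (m+1) - (1-q^(m+1))*qHermite q x m from rfl]
    rw [key m (by omega)] at ih0
    rw [key (m+1) (by omega)] at ih1
    have expand : ∀ j ∈ Finset.range (n+m+2+1),
        2*x*(gaussBinom q (m+1) j * gaussBinom q n j *
            (∏ i ∈ Finset.range j, (1 - q ^ (i + 1))) * qHermite q x (n + (m+1) - 2 * j))
        = gaussBinom q (m+1) j * gaussBinom q n j *
            (∏ i ∈ Finset.range j, (1 - q ^ (i + 1))) * qHermite q x (n + (m+2) - 2 * j)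
          + gaussBinom q (m+1) j * gaussBinom q n j *
            (∏ i ∈ Finset.range j, (1 - q ^ (i + 1))) *
              ((1 - q^(n+m+1-2*j)) * qHermite q x (n + m - 2 * j)) := by
      intro j _
      by_cases hc : 2*j ≤ n+m+1
      · have hr := hermite_rec q x (n+(m+1)-2*j)
        rw [show n+(m+1)-2*j+1 = n+(m+2)-2*j from by omega,
          show n+(m+1)-2*j-1 = n+m-2*j from by omega,
          show (q:ℂ)^(n+(m+1)-2*j) = q^(n+m+1-2*j) from rfl] at hr
        linear_combination (gaussBinom q (m+1) j * gaussBinom q n j *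
          (∏ i ∈ Finset.range j, (1 - q ^ (i + 1)))) * hr
      · rcases (by omega : m+1 < j ∨ n < j) with h|h
        · rw [gauss_eq_zero q (m+1) j h]; ring
        · rw [gauss_eq_zero q n j h]; ring
    have main_eq : (∑ j ∈ Finset.range (n+m+2+1),
          (gaussBinom q (m+2) j * gaussBinom q n j *
            (∏ i ∈ Finset.range j, (1 - q ^ (i + 1))) * qHermite q x (n + (m+2) - 2 * j)
          - gaussBinom q (m+1) j * gaussBinom q n j *
            (∏ i ∈ Finset.range j, (1 - q ^ (i + 1))) * qHermite q x (n + (m+2) - 2 * j)))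
        = ∑ j ∈ Finset.range (n+m+2+1),
          (gaussBinom q (m+1) j * gaussBinom q n j *
            (∏ i ∈ Finset.range j, (1 - q ^ (i + 1))) *
              ((1 - q^(n+m+1-2*j)) * qHermite q x (n + m - 2 * j))
          - (1-q^(m+1)) * (gaussBinom q m j * gaussBinom q n j *
            (∏ i ∈ Finset.range j, (1 - q ^ (i + 1))) * qHermite q x (n + m - 2 * j))) := by
      rw [Finset.sum_range_succ' (fun j =>
            gaussBinom q (m+2) j * gaussBinom q n j *
              (∏ i ∈ Finset.range j, (1 - q ^ (i + 1))) * qHermite q x (n + (m+2) - 2 * j)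
            - gaussBinom q (m+1) j * gaussBinom q n j *
              (∏ i ∈ Finset.range j, (1 - q ^ (i + 1))) * qHermite q x (n + (m+2) - 2 * j)) (n+m+2),
        Finset.sum_range_succ (fun j =>
            gaussBinom q (m+1) j * gaussBinom q n j *
              (∏ i ∈ Finset.range j, (1 - q ^ (i + 1))) *
                ((1 - q^(n+m+1-2*j)) * qHermite q x (n + m - 2 * j))
            - (1-q^(m+1)) * (gaussBinom q m j * gaussBinom q n j *
              (∏ i ∈ Finset.range j, (1 - q ^ (i + 1))) * qHermite q x (n + m - 2 * j))) (n+m+2)]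
      congr 1
      · apply Finset.sum_congr rfl
        intro j _
        rw [show n+(m+2)-2*(j+1) = n+m-2*j from by omega]
        linear_combination qHermite q x (n+m-2*j) * KI q n m j
      · rw [show n+(m+2)-2*0 = n+(m+2) from by omega]
        rw [gauss_eq_zero q (m+1) (n+m+2) (by omega), gauss_eq_zero q m (n+m+2) (by omega)]
        simp only [gauss_zero_right, Finset.prod_range_zero]
        ring
    have hsub : (∑ j ∈ Finset.range (n+m+2+1),
          gaussBinom q (m+2) j * gaussBinom q n j *
            (∏ i ∈ Finset.range j, (1 - q ^ (i + 1))) * qHermite q x (n + (m+2) - 2 * j))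
        - (∑ j ∈ Finset.range (n+m+2+1),
          gaussBinom q (m+1) j * gaussBinom q n j *
            (∏ i ∈ Finset.range j, (1 - q ^ (i + 1))) * qHermite q x (n + (m+2) - 2 * j))
        = (∑ j ∈ Finset.range (n+m+2+1),
          gaussBinom q (m+1) j * gaussBinom q n j *
            (∏ i ∈ Finset.range j, (1 - q ^ (i + 1))) *
              ((1 - q^(n+m+1-2*j)) * qHermite q x (n + m - 2 * j)))
        - (∑ j ∈ Finset.range (n+m+2+1),
          (1-q^(m+1)) * (gaussBinom q m j * gaussBinom q n j *
            (∏ i ∈ Finset.range j, (1 - q ^ (i + 1))) * qHermite q x (n + m - 2 * j))) := by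
      rw [← Finset.sum_sub_distrib, ← Finset.sum_sub_distrib]
      exact main_eq
    calc qHermite q x n * (2*x*qHermite q x (m+1) - (1-q^(m+1))*qHermite q x m)
        = 2*x*(qHermite q x n * qHermite q x (m+1))
          - (1-q^(m+1))*(qHermite q x n * qHermite q x m) := by ring
      _ = 2*x*(∑ j ∈ Finset.range (n+m+2+1),
            gaussBinom q (m+1) j * gaussBinom q n j *
              (∏ i ∈ Finset.range j, (1 - q ^ (i + 1))) * qHermite q x (n + (m+1) - 2 * j))
          - (1-q^(m+1))*(∑ j ∈ Finset.range (n+m+2+1),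
            gaussBinom q m j * gaussBinom q n j *
              (∏ i ∈ Finset.range j, (1 - q ^ (i + 1))) * qHermite q x (n + m - 2 * j)) := by
          rw [ih0, ih1]
      _ = (∑ j ∈ Finset.range (n+m+2+1),
            2*x*(gaussBinom q (m+1) j * gaussBinom q n j *
              (∏ i ∈ Finset.range j, (1 - q ^ (i + 1))) * qHermite q x (n + (m+1) - 2 * j)))
          - (∑ j ∈ Finset.range (n+m+2+1),
            (1-q^(m+1))*(gaussBinom q m j * gaussBinom q n j *
              (∏ i ∈ Finset.range j, (1 - q ^ (i + 1))) * qHermite q x (n + m - 2 * j))) := by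
          rw [Finset.mul_sum, Finset.mul_sum]
      _ = (∑ j ∈ Finset.range (n+m+2+1),
            (gaussBinom q (m+1) j * gaussBinom q n j *
              (∏ i ∈ Finset.range j, (1 - q ^ (i + 1))) * qHermite q x (n + (m+2) - 2 * j)
            + gaussBinom q (m+1) j * gaussBinom q n j *
              (∏ i ∈ Finset.range j, (1 - q ^ (i + 1))) *
                ((1 - q^(n+m+1-2*j)) * qHermite q x (n + m - 2 * j))))
          - (∑ j ∈ Finset.range (n+m+2+1),
            (1-q^(m+1))*(gaussBinom q m j * gaussBinom q n j *
              (∏ i ∈ Finset.range j, (1 - q ^ (i + 1))) * qHermite q x (n + m - 2 * j))) := by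
          rw [Finset.sum_congr rfl expand]
      _ = (∑ j ∈ Finset.range (n+m+2+1),
            gaussBinom q (m+1) j * gaussBinom q n j *
              (∏ i ∈ Finset.range j, (1 - q ^ (i + 1))) * qHermite q x (n + (m+2) - 2 * j))
          + ((∑ j ∈ Finset.range (n+m+2+1),
            gaussBinom q (m+1) j * gaussBinom q n j *
              (∏ i ∈ Finset.range j, (1 - q ^ (i + 1))) *
                ((1 - q^(n+m+1-2*j)) * qHermite q x (n + m - 2 * j)))
          - (∑ j ∈ Finset.range (n+m+2+1),
            (1-q^(m+1))*(gaussBinom q m j * gaussBinom q n j *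
              (∏ i ∈ Finset.range j, (1 - q ^ (i + 1))) * qHermite q x (n + m - 2 * j)))) := by
          rw [Finset.sum_add_distrib]; ring
      _ = ∑ j ∈ Finset.range (n+m+2+1),
            gaussBinom q (m+2) j * gaussBinom q n j *
              (∏ i ∈ Finset.range j, (1 - q ^ (i + 1))) * qHermite q x (n + (m+2) - 2 * j) := by
          rw [← hsub]; ring
end
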